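/- arXiv:1707.00661 — 5 statements merged into one kernel-verified Lean document; each statement's English description precedes it below -/
import Mathlib

section
/- For every R ∈ SO(3) and every x ∈ ℝ³, ‖½ (tr(R) I₃ − R) x‖ ≤ ‖x‖, where ‖·‖ is the Euclidean norm; i.e. the operator norm of ½(tr(R) I₃ − R) is at most 1. -/
/-!
Write `t = tr R`. Since `R` is an isometry, `‖(t I - R) x‖² = t²‖x‖² - 2t⟪x, Rx⟫ + ‖x‖²`, which is
at most `4‖x‖²` as soon as `-1 ≤ t ≤ 3` and `(t - 1)‖x‖² ≤ 2⟪x, Rx⟫ ≤ 2‖x‖²`. The upper bound on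
`⟪x, Rx⟫` is Cauchy–Schwarz. Everything else comes from Cayley–Hamilton, which for `R ∈ SO(3)`
(where `adj R = Rᵀ`) reads `R² = tR - tI + Rᵀ`: it gives `tr R² = t² - 2t ≤ 3`, hence `t ≥ -1`,
and it shows that the symmetric matrix `N = R + Rᵀ - (t - 1) I` satisfies `N² = (3 - t) N`, so `N`
is positive semidefinite, which is the lower bound on `⟪x, Rx⟫`.
-/

open Matrix Filter
open scoped RealInnerProductSpace Topology

noncomputable section

/-- Euclidean 3-space. -/
abbrev V3 := EuclideanSpace ℝ (Fin 3)
/-- Euclidean 2-space. -/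
abbrev V2 := EuclideanSpace ℝ (Fin 2)

/-- The hat map sending `x ∈ ℝ³` to the skew-symmetric matrix with `hat x *ᵥ y = x × y`. -/
def hat (x : V3) : Matrix (Fin 3) (Fin 3) ℝ :=
  !![0, -x 2, x 1; x 2, 0, -x 0; -x 1, x 0, 0]

/-- The vee map, inverse of the hat map on skew-symmetric matrices. -/
def vee (A : Matrix (Fin 3) (Fin 3) ℝ) : V3 := WithLp.toLp 2 ![A 2 1, A 0 2, A 1 0]

/-- `R ∈ SO(3)`: real 3×3 matrices with `RᵀR = I` and `det R = 1`. -/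
def SO3 (R : Matrix (Fin 3) (Fin 3) ℝ) : Prop := Rᵀ * R = 1 ∧ R.det = 1

/-- The 3×2 matrix `E = [[1,0],[0,1],[0,0]]`. -/
def Emat : Matrix (Fin 3) (Fin 2) ℝ := !![1,0; 0,1; 0,0]

/-- The third standard basis vector `e₃ = (0,0,1)`. -/
def e3 : V3 := WithLp.toLp 2 ![0,0,1]

/-- Attitude error function `Ψ(R) = ½ tr(I₃ − R)`. -/
def Psi (R : Matrix (Fin 3) (Fin 3) ℝ) : ℝ := (1/2) * Matrix.trace (1 - R)

/-- Attitude error vector `η(R) = ½ (R − Rᵀ)^∨`. -/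
def etaVec (R : Matrix (Fin 3) (Fin 3) ℝ) : V3 := (2⁻¹ : ℝ) • vee (R - Rᵀ)

/-- Matrix-vector multiplication `ℝ³ → ℝ³` (valued in Euclidean space). -/
def mv3 (A : Matrix (Fin 3) (Fin 3) ℝ) (x : V3) : V3 := WithLp.toLp 2 (A.mulVec x)

/-- `E x` for `x ∈ ℝ²`. -/
def mvE (x : V2) : V3 := WithLp.toLp 2 (Emat.mulVec x)

/-- `Eᵀ y` for `y ∈ ℝ³`. -/
def mvET (y : V3) : V2 := WithLp.toLp 2 (Ematᵀ.mulVec y)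

attribute [local instance] Matrix.normedAddCommGroup Matrix.normedSpace


namespace Matrix

variable {n : Type*} [Fintype n] [DecidableEq n]

theorem inner_toEuclideanLin_transpose (A : Matrix n n ℝ) (x y : EuclideanSpace ℝ n) :
    ⟪x, Aᵀ.toEuclideanLin y⟫ = ⟪A.toEuclideanLin x, y⟫ := by
  rw [← conjTranspose_eq_transpose_of_trivial, toEuclideanLin_conjTranspose_eq_adjoint,
    LinearMap.adjoint_inner_right]

theorem norm_toEuclideanLin_of_transpose_mul_self {A : Matrix n n ℝ} (hA : Aᵀ * A = 1)
    (x : EuclideanSpace ℝ n) : ‖A.toEuclideanLin x‖ = ‖x‖ := by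
  rw [← sq_eq_sq₀ (norm_nonneg _) (norm_nonneg _), ← real_inner_self_eq_norm_sq,
    ← real_inner_self_eq_norm_sq, ← inner_toEuclideanLin_transpose, ← LinearMap.comp_apply,
    ← toLpLin_mul_same, hA, toLpLin_one, LinearMap.id_apply]

theorem trace_le_card_of_transpose_mul_self {A : Matrix n n ℝ} (hA : Aᵀ * A = 1) :
    A.trace ≤ Fintype.card n := by
  have hU : A ∈ unitaryGroup n ℝ := mem_unitaryGroup_iff'.mpr hA
  rw [trace, ← nsmul_one, ← Finset.card_univ, ← Finset.sum_const]
  exact Finset.sum_le_sum fun i _ => (le_abs_self _).trans (entry_norm_bound_of_unitary hU i i)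

theorem adjugate_fin_three_eq {R : Type*} [CommRing R] (A : Matrix (Fin 3) (Fin 3) R) :
    A.adjugate = A * A - A.trace • A + A.adjugate.trace • 1 := by
  ext i j
  fin_cases i <;> fin_cases j <;>
    simp [adjugate_fin_three, mul_apply, trace_fin_three, Fin.sum_univ_three] <;> ring

end Matrix

theorem LinearMap.IsSymmetric.isPositive_of_mul_self_eq_smul {E : Type*}
    [NormedAddCommGroup E] [InnerProductSpace ℝ E] {T : E →ₗ[ℝ] E} (hT : T.IsSymmetric)
    {a : ℝ} (ha : 0 ≤ a) (hTT : T * T = a • T) : T.IsPositive := by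
  refine ⟨hT, fun x => ?_⟩
  have hsq : a * ⟪T x, x⟫ = ‖T x‖ ^ 2 := by
    rw [← real_inner_smul_left, ← LinearMap.smul_apply, ← hTT, Module.End.mul_apply,
      hT, real_inner_self_eq_norm_sq]
  rcases ha.eq_or_lt with rfl | ha
  · have hTx : ‖T x‖ ^ 2 = 0 := by simpa using hsq.symm
    simp [norm_eq_zero.mp (pow_eq_zero_iff two_ne_zero |>.mp hTx)]
  · exact (mul_nonneg_iff_of_pos_left ha).mp (hsq ▸ sq_nonneg _)

theorem mv3_eq_toEuclideanLin (A : Matrix (Fin 3) (Fin 3) ℝ) (x : V3) :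
    mv3 A x = A.toEuclideanLin x := rfl

namespace SO3

variable {R : Matrix (Fin 3) (Fin 3) ℝ}

theorem adjugate_eq (hR : SO3 R) : R.adjugate = Rᵀ :=
  calc R.adjugate = Rᵀ * R * R.adjugate := by rw [hR.1, one_mul]
    _ = Rᵀ := by rw [mul_assoc, mul_adjugate, hR.2, one_smul, mul_one]

theorem mul_self_eq (hR : SO3 R) : R * R = R.trace • R - R.trace • 1 + Rᵀ := by
  have h := R.adjugate_fin_three_eq
  rw [hR.adjugate_eq, trace_transpose] at h
  rw [h]
  abel

theorem trace_mem_Icc (hR : SO3 R) : R.trace ∈ Set.Icc (-1) 3 := by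
  have hR2 : (R * R)ᵀ * (R * R) = 1 := by
    rw [transpose_mul, mul_assoc, ← mul_assoc Rᵀ R, hR.1, one_mul, hR.1]
  have h₁ := trace_le_card_of_transpose_mul_self hR.1
  have h₂ := trace_le_card_of_transpose_mul_self hR2
  rw [hR.mul_self_eq] at h₂
  simp only [trace_add, trace_sub, trace_smul, trace_one, trace_transpose, Fintype.card_fin,
    smul_eq_mul, Nat.cast_ofNat] at h₁ h₂
  constructor <;> nlinarith

theorem isPositive_toEuclideanLin_add_transpose_sub (hR : SO3 R) :
    (R + Rᵀ - (R.trace - 1) • 1).toEuclideanLin.IsPositive := by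
  set t := R.trace
  have hRT : R * Rᵀ = 1 := mul_eq_one_comm.mp hR.1
  have hRT2 : Rᵀ * Rᵀ = t • Rᵀ - t • 1 + R := by
    simpa [transpose_mul] using congrArg transpose hR.mul_self_eq
  have hNN : (R + Rᵀ - (t - 1) • 1) * (R + Rᵀ - (t - 1) • 1) =
      (3 - t) • (R + Rᵀ - (t - 1) • 1) := by
    simp only [add_mul, mul_add, sub_mul, mul_sub, smul_mul_assoc, mul_smul_comm,
      one_mul, mul_one, hR.mul_self_eq, hRT2, hR.1, hRT, smul_sub, smul_add, smul_smul]
    module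
  -- `N = (3 - t) n nᵀ` for the rotation axis `n`, so `N / (3 - t)` is a projection.
  refine LinearMap.IsSymmetric.isPositive_of_mul_self_eq_smul ?_
    (sub_nonneg.mpr hR.trace_mem_Icc.2) ?_
  · rw [isSymmetric_toEuclideanLin_iff]
    simp [IsHermitian, conjTranspose_eq_transpose_of_trivial, add_comm]
  · rw [Module.End.mul_eq_comp, ← toLpLin_mul_same, hNN, map_smul]

theorem trace_sub_one_mul_norm_sq_le (hR : SO3 R) (x : V3) :
    (R.trace - 1) * ‖x‖ ^ 2 ≤ 2 * ⟪x, R.toEuclideanLin x⟫ := by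
  have h := hR.isPositive_toEuclideanLin_add_transpose_sub.inner_nonneg_left x
  rw [map_sub, map_add, LinearMap.sub_apply, LinearMap.add_apply, inner_sub_left,
    inner_add_left, real_inner_comm, ← inner_toEuclideanLin_transpose, transpose_transpose,
    map_smul, toLpLin_one, LinearMap.smul_apply, LinearMap.id_apply, real_inner_smul_left,
    real_inner_self_eq_norm_sq] at h
  linarith

end SO3

/-- For every `R ∈ SO(3)` and `x ∈ ℝ³`, `‖½ (tr(R) I₃ − R) x‖ ≤ ‖x‖`. -/
theorem half_trace_sub_opNorm_le (R : Matrix (Fin 3) (Fin 3) ℝ) (hR : SO3 R) (x : V3) :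
    ‖(2⁻¹ : ℝ) • mv3 (Matrix.trace R • 1 - R) x‖ ≤ ‖x‖ := by
  set t := R.trace
  obtain ⟨ht₁, ht₃⟩ := hR.trace_mem_Icc
  have hlow := hR.trace_sub_one_mul_norm_sq_le x
  have hRx := norm_toEuclideanLin_of_transpose_mul_self hR.1 x
  have hcs : ⟪x, R.toEuclideanLin x⟫ ≤ ‖x‖ ^ 2 := by
    simpa [hRx, sq] using real_inner_le_norm x (R.toEuclideanLin x)
  have hsq : ‖mv3 (t • 1 - R) x‖ ^ 2 ≤ (2 * ‖x‖) ^ 2 := by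
    rw [mv3_eq_toEuclideanLin, map_sub, map_smul, toLpLin_one, LinearMap.sub_apply,
      LinearMap.smul_apply, LinearMap.id_apply, norm_sub_sq_real, hRx, norm_smul,
      real_inner_smul_left, mul_pow, Real.norm_eq_abs, sq_abs]
    rcases le_total 0 t with ht | ht <;> nlinarith
  have hnorm : ‖mv3 (t • 1 - R) x‖ ≤ 2 * ‖x‖ :=
    (pow_le_pow_iff_left₀ (norm_nonneg _) (by positivity) two_ne_zero).mp hsq
  rw [norm_smul, Real.norm_of_nonneg (by norm_num)]
  linarith
end
end

section
/- Let R : I → SO(3) and Ω : I → ℝ³ be differentiable with Ṙ(t) = R(t) Ω̂(t), and define η(t) = ½ (R(t) − R(t)ᵀ)^∨. Then η is differentiable and ‖η̇(t)‖ ≤ ‖Ω(t)‖ for all t ∈ I, where ‖·‖ is the Euclidean norm on ℝ³. -/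
open Matrix Filter
open scoped RealInnerProductSpace Topology

noncomputable section

attribute [local instance] Matrix.normedAddCommGroup Matrix.normedSpace

/-! Since `etaVec` is linear, `η̇ = etaVec (R Ω̂)`. Writing `A = R Ω̂`, the entries of `2 etaVec A` are
differences `A i j - A j i` of off-diagonal entries, so `‖2 etaVec A‖² ≤ 2 tr (AᵀA)`; and
`tr (AᵀA) = tr (Ω̂ᵀΩ̂) = 2 ‖Ω‖²` because `R` is orthogonal. -/

theorem vee_add (A B : Matrix (Fin 3) (Fin 3) ℝ) : vee (A + B) = vee A + vee B := by
  ext i; fin_cases i <;> rfl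

theorem vee_smul (c : ℝ) (A : Matrix (Fin 3) (Fin 3) ℝ) : vee (c • A) = c • vee A := by
  ext i; fin_cases i <;> rfl

def etaVecₗ : Matrix (Fin 3) (Fin 3) ℝ →ₗ[ℝ] V3 where
  toFun := etaVec
  map_add' A B := by simp only [etaVec, transpose_add, add_sub_add_comm, vee_add, smul_add]
  map_smul' c A := by
    simp only [etaVec, transpose_smul, ← smul_sub, vee_smul, RingHom.id_apply, smul_comm c]

theorem HasDerivAt.etaVec {R : ℝ → Matrix (Fin 3) (Fin 3) ℝ} {R' : Matrix (Fin 3) (Fin 3) ℝ}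
    {t : ℝ} (hR : HasDerivAt R R' t) : HasDerivAt (fun s => etaVec (R s)) (etaVec R') t :=
  etaVecₗ.toContinuousLinearMap.hasFDerivAt.comp_hasDerivAt t hR

theorem Matrix.trace_transpose_mul_self_mul_left {m n α : Type*} [Fintype m] [Fintype n]
    [DecidableEq m] [CommSemiring α] {Q : Matrix m m α} (hQ : Qᵀ * Q = 1) (B : Matrix m n α) :
    trace ((Q * B)ᵀ * (Q * B)) = trace (Bᵀ * B) := by
  rw [transpose_mul, Matrix.mul_assoc, ← Matrix.mul_assoc Qᵀ, hQ, Matrix.one_mul]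

theorem trace_transpose_hat_mul_hat (x : V3) : trace ((hat x)ᵀ * hat x) = 2 * ‖x‖ ^ 2 := by
  simp only [trace, hat, diag_apply, Matrix.mul_apply, transpose_apply, of_apply, cons_val',
    cons_val_fin_one, Fin.sum_univ_three, cons_val_zero, cons_val_one, cons_val,
    EuclideanSpace.norm_sq_eq, Real.norm_eq_abs, sq_abs]
  ring

theorem norm_vee_sub_transpose_sq_le (A : Matrix (Fin 3) (Fin 3) ℝ) :
    ‖vee (A - Aᵀ)‖ ^ 2 ≤ 2 * trace (Aᵀ * A) := by
  simp only [vee, Matrix.sub_apply, transpose_apply, EuclideanSpace.norm_sq_eq, Real.norm_eq_abs,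
    sq_abs, Fin.sum_univ_three, cons_val_zero, cons_val_one, cons_val, trace, diag_apply,
    Matrix.mul_apply]
  nlinarith [sq_nonneg (A 0 0), sq_nonneg (A 1 1), sq_nonneg (A 2 2),
    sq_nonneg (A 2 1 + A 1 2), sq_nonneg (A 0 2 + A 2 0), sq_nonneg (A 1 0 + A 0 1)]

theorem norm_etaVec_mul_hat_le {R : Matrix (Fin 3) (Fin 3) ℝ} (hR : Rᵀ * R = 1) (x : V3) :
    ‖etaVec (R * hat x)‖ ≤ ‖x‖ := by
  have hsq : ‖etaVec (R * hat x)‖ ^ 2 ≤ ‖x‖ ^ 2 :=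
    calc ‖etaVec (R * hat x)‖ ^ 2 = ‖vee (R * hat x - (R * hat x)ᵀ)‖ ^ 2 / 4 := by
          rw [etaVec, norm_smul, mul_pow, norm_inv, Real.norm_two]; ring
      _ ≤ 2 * trace ((R * hat x)ᵀ * (R * hat x)) / 4 := by
          gcongr; exact norm_vee_sub_transpose_sq_le _
      _ = ‖x‖ ^ 2 := by
          rw [trace_transpose_mul_self_mul_left hR, trace_transpose_hat_mul_hat]; ring
  exact (sq_le_sq₀ (norm_nonneg _) (norm_nonneg _)).mp hsq

/-- if `Ṙ = R Ω̂` on `I` with `R` valued in SO(3), then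
`η(t) = ½(R(t) − R(t)ᵀ)^∨` is differentiable with `‖η̇(t)‖ ≤ ‖Ω(t)‖` on `I`. -/
theorem etaVec_deriv_norm_le (I : Set ℝ) (R : ℝ → Matrix (Fin 3) (Fin 3) ℝ) (Ω : ℝ → V3)
    (hSO : ∀ t ∈ I, SO3 (R t))
    (hR : ∀ t ∈ I, HasDerivAt R (R t * hat (Ω t)) t) :
    ∀ t ∈ I, DifferentiableAt ℝ (fun s => etaVec (R s)) t ∧
      ‖deriv (fun s => etaVec (R s)) t‖ ≤ ‖Ω t‖ := by
  intro t ht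
  have hη := (hR t ht).etaVec
  exact ⟨hη.differentiableAt, hη.deriv ▸ norm_etaVec_mul_hat_le (hSO t ht).1 (Ω t)⟩
end
end

section
/- Let R, R_d : I → SO(3) and Ω, Ω_d : I → ℝ³ be differentiable with Ṙ = R Ω̂ and Ṙ_d = R_d Ω̂_d. Define the attitude tracking error e_R = ½ (R_dᵀ R − Rᵀ R_d)^∨ and angular velocity tracking error e_Ω = Ω − Rᵀ R_d Ω_d. Then ė_R = ½ (tr(Rᵀ R_d) I₃ − Rᵀ R_d) e_Ω. -/
open Matrix Filter
open scoped RealInnerProductSpace Topology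

noncomputable section

attribute [local instance] Matrix.normedAddCommGroup Matrix.normedSpace

/-!
With `C = Rᵀ R_d` the attitude error is `e_R = ½ (Cᵀ - C)^∨`. The identity
`Mᵀ (M v)^ M = det M • v̂` says that conjugation by `C ∈ SO(3)` carries `Ω̂_d` to `(C Ω_d)^`,
so `Ċ = -Ω̂ C + C Ω̂_d = -ê_Ω C`. Hence `d/dt (Cᵀ - C) = Cᵀ ê_Ω + ê_Ω C`, and the vee of
`Aᵀ ẑ + ẑ A` is `(tr A • I₃ - A) z`.
-/

theorem HasDerivAt.matrix_mul {𝕜 n : Type*} [NontriviallyNormedField 𝕜] [Fintype n]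
    [DecidableEq n] {A B : 𝕜 → Matrix n n 𝕜} {A' B' : Matrix n n 𝕜} {t : 𝕜}
    (hA : HasDerivAt A A' t) (hB : HasDerivAt B B' t) :
    HasDerivAt (fun s => A s * B s) (A' * B t + A t * B') t := by
  -- derivatives only see the topology, so any normed-algebra structure on matrices will do
  let _ : NormedRing (Matrix n n 𝕜) := Matrix.linftyOpNormedRing
  let _ : NormedAlgebra 𝕜 (Matrix n n 𝕜) := Matrix.linftyOpNormedAlgebra
  exact hA.mul hB

theorem HasDerivAt.matrix_transpose {𝕜 m n : Type*} [NontriviallyNormedField 𝕜] [Fintype m]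
    [Fintype n] {A : 𝕜 → Matrix m n 𝕜} {A' : Matrix m n 𝕜} {t : 𝕜} (hA : HasDerivAt A A' t) :
    HasDerivAt (fun s => (A s)ᵀ) A'ᵀ t :=
  ((transposeLinearEquiv m n 𝕜 𝕜).toLinearMap.mkContinuous 1 fun A => by
    simp [norm_transpose]).hasFDerivAt.comp_hasDerivAt t hA

def veeLinearMap : Matrix (Fin 3) (Fin 3) ℝ →ₗ[ℝ] V3 where
  toFun := vee
  map_add' A B := by ext i; fin_cases i <;> simp [vee]
  map_smul' c A := by ext i; fin_cases i <;> simp [vee]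

theorem HasDerivAt.vee {A : ℝ → Matrix (Fin 3) (Fin 3) ℝ} {A' : Matrix (Fin 3) (Fin 3) ℝ}
    {t : ℝ} (hA : HasDerivAt A A' t) : HasDerivAt (fun s => vee (A s)) (vee A') t :=
  (LinearMap.toContinuousLinearMap veeLinearMap).hasFDerivAt.comp_hasDerivAt t hA

theorem hat_sub (a b : V3) : hat (a - b) = hat a - hat b := by
  ext i j; fin_cases i <;> fin_cases j <;> simp [hat] <;> ring

theorem hat_transpose (a : V3) : (hat a)ᵀ = -hat a := by
  ext i j; fin_cases i <;> fin_cases j <;> simp [hat]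

theorem vee_transpose_mul_hat_add_hat_mul (A : Matrix (Fin 3) (Fin 3) ℝ) (z : V3) :
    vee (Aᵀ * hat z + hat z * A) = mv3 (trace A • 1 - A) z := by
  ext i
  fin_cases i <;>
    simp [vee, hat, mv3, mul_apply, mulVec, vecMul, trace, dotProduct, Fin.sum_univ_three,
      one_apply] <;> ring

theorem SO3.mul_transpose {C : Matrix (Fin 3) (Fin 3) ℝ} (hC : SO3 C) : C * Cᵀ = 1 :=
  mul_eq_one_comm.mp hC.1

theorem SO3.transpose_mul {R S : Matrix (Fin 3) (Fin 3) ℝ} (hR : SO3 R) (hS : SO3 S) :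
    SO3 (Rᵀ * S) := by
  refine ⟨?_, by rw [det_mul, det_transpose, hR.2, hS.2, one_mul]⟩
  rw [Matrix.transpose_mul, transpose_transpose, Matrix.mul_assoc, ← Matrix.mul_assoc R,
    hR.mul_transpose, Matrix.one_mul, hS.1]

theorem transpose_mul_hat_mv3_mul (M : Matrix (Fin 3) (Fin 3) ℝ) (v : V3) :
    Mᵀ * hat (mv3 M v) * M = M.det • hat v := by
  ext i j
  fin_cases i <;> fin_cases j <;>
    simp [hat, mv3, mul_apply, mulVec, dotProduct, Fin.sum_univ_three, det_fin_three] <;> ring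

theorem SO3.mul_hat {C : Matrix (Fin 3) (Fin 3) ℝ} (hC : SO3 C) (v : V3) :
    C * hat v = hat (mv3 C v) * C := by
  rw [← one_smul ℝ (hat v), ← hC.2, ← transpose_mul_hat_mv3_mul, ← Matrix.mul_assoc,
    ← Matrix.mul_assoc, hC.mul_transpose, Matrix.one_mul]

theorem hasDerivAt_transpose_mul_of_kinematics {R Rd : ℝ → Matrix (Fin 3) (Fin 3) ℝ}
    {Ω Ωd : V3} {t : ℝ} (hR : HasDerivAt R (R t * hat Ω) t)
    (hRd : HasDerivAt Rd (Rd t * hat Ωd) t) (hC : SO3 ((R t)ᵀ * Rd t)) :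
    HasDerivAt (fun s => (R s)ᵀ * Rd s)
      (-(hat (Ω - mv3 ((R t)ᵀ * Rd t) Ωd) * ((R t)ᵀ * Rd t))) t := by
  convert hR.matrix_transpose.matrix_mul hRd using 1
  rw [hat_sub, Matrix.sub_mul, ← hC.mul_hat, Matrix.transpose_mul, hat_transpose]
  simp only [Matrix.neg_mul, Matrix.mul_assoc]
  abel

theorem HasDerivAt.vee_transpose_sub {C : ℝ → Matrix (Fin 3) (Fin 3) ℝ} {z : V3} {t : ℝ}
    (hC : HasDerivAt C (-(hat z * C t)) t) :
    HasDerivAt (fun s => (2⁻¹ : ℝ) • _root_.vee ((C s)ᵀ - C s))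
      ((2⁻¹ : ℝ) • mv3 (trace (C t) • 1 - C t) z) t := by
  have hskew : (-(hat z * C t))ᵀ - -(hat z * C t) = (C t)ᵀ * hat z + hat z * C t := by
    rw [transpose_neg, Matrix.transpose_mul, hat_transpose, Matrix.mul_neg, neg_neg,
      sub_neg_eq_add]
  rw [← vee_transpose_mul_hat_add_hat_mul, ← hskew]
  exact (hC.matrix_transpose.fun_sub hC).vee.fun_const_smul (2⁻¹ : ℝ)

/-- for attitudes `R, R_d` with kinematics `Ṙ = RΩ̂`, `Ṙ_d = R_d Ω̂_d`,
the tracking errors `e_R = ½(R_dᵀR − RᵀR_d)^∨` and `e_Ω = Ω − RᵀR_d Ω_d` satisfy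
`ė_R = ½ (tr(RᵀR_d) I₃ − RᵀR_d) e_Ω`. -/
theorem attitude_error_deriv (I : Set ℝ)
    (R Rd : ℝ → Matrix (Fin 3) (Fin 3) ℝ) (Ω Ωd : ℝ → V3)
    (hSO : ∀ t ∈ I, SO3 (R t)) (hSOd : ∀ t ∈ I, SO3 (Rd t))
    (hR : ∀ t ∈ I, HasDerivAt R (R t * hat (Ω t)) t)
    (hRd : ∀ t ∈ I, HasDerivAt Rd (Rd t * hat (Ωd t)) t) :
    ∀ t ∈ I,
      HasDerivAt (fun s => (2⁻¹ : ℝ) • vee ((Rd s)ᵀ * R s - (R s)ᵀ * Rd s))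
        ((2⁻¹ : ℝ) • mv3 (Matrix.trace ((R t)ᵀ * Rd t) • 1 - (R t)ᵀ * Rd t)
          (Ω t - mv3 ((R t)ᵀ * Rd t) (Ωd t))) t := by
  intro t ht
  have hC : SO3 ((R t)ᵀ * Rd t) := (hSO t ht).transpose_mul (hSOd t ht)
  simpa only [Matrix.transpose_mul, transpose_transpose] using
    HasDerivAt.vee_transpose_sub (hasDerivAt_transpose_mul_of_kinematics (hR t ht) (hRd t ht) hC)
end
end

section
/- Let x₁, x₂, x₃ ∈ ℝ³ be vectors lying in a common plane through the origin (coplanar) such that the three points x₁, x₂, x₃ do not all lie on a single line (not collinear). Then the 6×9 real block matrix A = [[I₃, I₃, I₃], [x̂₁, x̂₂, x̂₃]] has full row rank 6. -/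
open Matrix Filter
open scoped RealInnerProductSpace Topology

noncomputable section

attribute [local instance] Matrix.normedAddCommGroup Matrix.normedSpace

/-!
Write a row vector of `ℝ⁶` as `(a, b)` with `a, b ∈ ℝ³`. Since `bᵀ x̂ = b × x`, the relation
`(a, b) A = 0` says `a + b × xᵢ = 0` for `i = 1, 2, 3`. Then `b × (xᵢ - x₁) = 0`, so if `b ≠ 0`
all three points lie on the line `x₁ + ℝ b`, contradicting non-collinearity. Hence `b = 0`, then
`a = 0`: the six rows of `A` are linearly independent.
-/

lemma Matrix.rank_eq_card_of_vecMul_eq_zero {m n K : Type*} [Fintype m] [Fintype n] [Field K]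
    {M : Matrix m n K} (h : ∀ y, y ᵥ* M = 0 → y = 0) : M.rank = Fintype.card m :=
  LinearIndependent.rank_matrix <|
    Matrix.vecMul_injective_iff.mp ((injective_iff_map_eq_zero M.vecMulLinear).mpr h)

lemma Matrix.vecMul_fromBlocks_one_fromCols_one_one_eq_zero_iff {n R : Type*} [Fintype n]
    [DecidableEq n] [CommRing R] (y : n ⊕ n → R) (C₁ C₂ C₃ : Matrix n n R) :
    y ᵥ* fromBlocks 1 (fromCols 1 1) C₁ (fromCols C₂ C₃) = 0 ↔
      y ∘ Sum.inl + y ∘ Sum.inr ᵥ* C₁ = 0 ∧ y ∘ Sum.inl + y ∘ Sum.inr ᵥ* C₂ = 0 ∧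
        y ∘ Sum.inl + y ∘ Sum.inr ᵥ* C₃ = 0 := by
  simp only [vecMul_fromBlocks, vecMul_fromCols, vecMul_one, ← Sum.elim_add_add,
    ← Sum.elim_zero_zero, funext_iff, Sum.forall, Sum.elim_inl, Sum.elim_inr]

lemma exists_smul_eq_of_cross_eq_zero {F : Type*} [Field F] {b v : Fin 3 → F} (hb : b ≠ 0)
    (h : b ⨯₃ v = 0) : ∃ r : F, r • b = v := by
  by_contra! hv
  exact crossProduct_ne_zero_iff_linearIndependent.mpr ((LinearIndependent.pair_iff' hb).mpr hv) h

lemma vecMul_hat (b : Fin 3 → ℝ) (x : V3) : b ᵥ* hat x = b ⨯₃ x := by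
  ext i
  fin_cases i <;> simp [hat, vecMul, dotProduct, cross_apply, Fin.sum_univ_three] <;> ring

lemma eq_zero_of_cross_eq_of_not_collinear {x₁ x₂ x₃ : V3}
    (hncol : ¬ Collinear ℝ ({x₁, x₂, x₃} : Set V3)) {b : Fin 3 → ℝ}
    (h₂ : b ⨯₃ x₂ = b ⨯₃ x₁) (h₃ : b ⨯₃ x₃ = b ⨯₃ x₁) : b = 0 := by
  by_contra hb
  have on_line : ∀ x : V3, b ⨯₃ x = b ⨯₃ x₁ → ∃ r : ℝ, x = r • WithLp.toLp 2 b +ᵥ x₁ := by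
    intro x hx
    obtain ⟨r, hr⟩ := exists_smul_eq_of_cross_eq_zero hb
      (show b ⨯₃ (x - x₁ : V3) = 0 by rw [WithLp.ofLp_sub, map_sub, hx, sub_self])
    refine ⟨r, ?_⟩
    ext i
    simpa [sub_eq_iff_eq_add] using (congrFun hr i).symm
  refine hncol ((collinear_iff_of_mem (by simp : x₁ ∈ _)).mpr ⟨WithLp.toLp 2 b, ?_⟩)
  simp only [Set.mem_insert_iff, Set.mem_singleton_iff]
  rintro p (rfl | rfl | rfl)
  · exact ⟨0, by simp⟩
  · exact on_line p h₂
  · exact on_line p h₃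

theorem block_matrix_full_rank_general (x₁ x₂ x₃ : V3)
    (hncol : ¬ Collinear ℝ ({x₁, x₂, x₃} : Set V3)) :
    (Matrix.fromBlocks (1 : Matrix (Fin 3) (Fin 3) ℝ) (Matrix.fromCols 1 1)
      (hat x₁) (Matrix.fromCols (hat x₂) (hat x₃))).rank = 6 := by
  refine (Matrix.rank_eq_card_of_vecMul_eq_zero fun y hy => ?_).trans rfl
  rw [Matrix.vecMul_fromBlocks_one_fromCols_one_one_eq_zero_iff] at hy
  simp only [vecMul_hat] at hy
  obtain ⟨h₁, h₂, h₃⟩ := hy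
  have hb : y ∘ Sum.inr = 0 := eq_zero_of_cross_eq_of_not_collinear hncol
    (add_left_cancel (h₂.trans h₁.symm)) (add_left_cancel (h₃.trans h₁.symm))
  have ha : y ∘ Sum.inl = 0 := by simpa [hb] using h₁
  rw [← Sum.elim_comp_inl_inr y, ha, hb, Sum.elim_zero_zero]

/-- if `x₁, x₂, x₃ ∈ ℝ³` lie in a common plane through the origin but the
three points are not collinear, then the 6×9 block matrix
`A = [[I₃, I₃, I₃], [x̂₁, x̂₂, x̂₃]]` has full row rank 6. -/
theorem block_matrix_full_rank (x₁ x₂ x₃ : V3)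
    (hplane : ∃ ν : V3, ν ≠ 0 ∧ ⟪ν, x₁⟫ = 0 ∧ ⟪ν, x₂⟫ = 0 ∧ ⟪ν, x₃⟫ = 0)
    (hncol : ¬ Collinear ℝ ({x₁, x₂, x₃} : Set V3)) :
    (Matrix.fromBlocks (1 : Matrix (Fin 3) (Fin 3) ℝ) (Matrix.fromCols 1 1)
      (hat x₁) (Matrix.fromCols (hat x₂) (hat x₃))).rank = 6 :=
  block_matrix_full_rank_general x₁ x₂ x₃ hncol
end
end

section
/- For any k₁ > 0 and k₂ > 0, there exist c₀ > 0 and ε > 0 such that for all R ∈ SO(3) and all Ω ∈ ℝ³: ½ ‖Ω‖² + c₀ ⟨η(R), Ω⟩ + (k₂ + c₀ k₁) Ψ(R) ≥ ε (‖Ω‖² + Ψ(R)), i.e. the attitude Lyapunov function V₂ is positive definite on SO(3) × ℝ³ for sufficiently small c₀, vanishing only at (R, Ω) = (I₃, 0). -/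
open Matrix Filter
open scoped RealInnerProductSpace Topology

noncomputable section

attribute [local instance] Matrix.normedAddCommGroup Matrix.normedSpace

/-!
On orthogonal matrices the attitude quantities are Frobenius norms: `Ψ(R) = ¼‖R - I‖²` and
`‖η(R)‖² = ⅛‖R - Rᵀ‖² ≤ ½‖R - I‖² = 2Ψ(R)`. Hence `Ψ ≥ 0`, with equality only at `R = I`, and
Young's inequality gives `c₀⟨η, Ω⟩ ≥ -(c₀/2)‖Ω‖² - c₀Ψ`. For `c₀ ≤ min(1, k₂)/2` the Lyapunov
function therefore dominates `(c₀/2)(‖Ω‖² + Ψ)`.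
-/

section TraceForm

variable {n : Type*} [Fintype n]

lemma Matrix.trace_transpose_mul_self_nonneg (A : Matrix n n ℝ) : 0 ≤ (Aᵀ * A).trace := by
  simpa using (posSemidef_conjTranspose_mul_self A).trace_nonneg

lemma Matrix.trace_transpose_mul_self_eq_zero_iff {A : Matrix n n ℝ} :
    (Aᵀ * A).trace = 0 ↔ A = 0 := by
  simpa using trace_conjTranspose_mul_self_eq_zero_iff (A := A)

-- Parallelogram law for the Frobenius form `tr (Bᵀ * B)`, with the symmetric part `A + Aᵀ` dropped.
lemma Matrix.trace_sub_transpose_sq_le (A : Matrix n n ℝ) :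
    ((A - Aᵀ)ᵀ * (A - Aᵀ)).trace ≤ 4 * (Aᵀ * A).trace := by
  have hsym := (A + Aᵀ).trace_transpose_mul_self_nonneg
  have hAAt : (A * Aᵀ).trace = (Aᵀ * A).trace := trace_mul_comm _ _
  have hAtAt : (Aᵀ * Aᵀ).trace = (A * A).trace := by rw [← transpose_mul, trace_transpose]
  simp only [transpose_sub, transpose_add, transpose_transpose, sub_mul, mul_sub, add_mul,
    mul_add, trace_sub, trace_add] at hsym ⊢
  linarith

lemma Matrix.two_mul_trace_one_sub_of_transpose_mul_self [DecidableEq n] {R : Matrix n n ℝ}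
    (hR : Rᵀ * R = 1) : 2 * (1 - R).trace = ((R - 1)ᵀ * (R - 1)).trace := by
  simp only [transpose_sub, transpose_one, sub_mul, mul_sub, hR, mul_one, one_mul, trace_sub,
    trace_transpose]
  ring

end TraceForm

section Attitude

variable {R : Matrix (Fin 3) (Fin 3) ℝ}

lemma Psi_eq_of_transpose_mul_self (hR : Rᵀ * R = 1) :
    Psi R = ((R - 1)ᵀ * (R - 1)).trace / 4 := by
  rw [Psi, ← two_mul_trace_one_sub_of_transpose_mul_self hR]
  ring

lemma Psi_nonneg (hR : Rᵀ * R = 1) : 0 ≤ Psi R := by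
  rw [Psi_eq_of_transpose_mul_self hR]
  have := (R - 1).trace_transpose_mul_self_nonneg
  positivity

lemma eq_one_of_Psi_eq_zero (hR : Rᵀ * R = 1) (h : Psi R = 0) : R = 1 := by
  rw [Psi_eq_of_transpose_mul_self hR, div_eq_zero_iff, trace_transpose_mul_self_eq_zero_iff,
    sub_eq_zero] at h
  exact h.resolve_right four_ne_zero

lemma norm_etaVec_sq (R : Matrix (Fin 3) (Fin 3) ℝ) :
    ‖etaVec R‖ ^ 2 = ((R - Rᵀ)ᵀ * (R - Rᵀ)).trace / 8 := by
  rw [EuclideanSpace.real_norm_sq_eq]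
  simp only [etaVec, vee, Matrix.sub_apply, transpose_apply, PiLp.smul_apply, smul_eq_mul,
    Fin.sum_univ_three, cons_val_zero, cons_val_one, cons_val, trace, transpose_sub,
    transpose_transpose, diag_apply, Matrix.mul_apply, sub_self, mul_zero, zero_add, add_zero]
  ring

lemma norm_etaVec_sq_le (hR : Rᵀ * R = 1) : ‖etaVec R‖ ^ 2 ≤ 2 * Psi R := by
  have hskew : (R - 1) - (R - 1)ᵀ = R - Rᵀ := by
    rw [transpose_sub, transpose_one, sub_sub_sub_cancel_right]
  have h := (R - 1).trace_sub_transpose_sq_le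
  rw [hskew] at h
  rw [norm_etaVec_sq, Psi_eq_of_transpose_mul_self hR]
  linarith

end Attitude

lemma lyapunov_lower_bound {E : Type*} [NormedAddCommGroup E] [InnerProductSpace ℝ E]
    {η Ω : E} {ψ c k₁ k₂ : ℝ} (hη : ‖η‖ ^ 2 ≤ 2 * ψ) (hc : 0 ≤ c) (hk₁ : 0 ≤ k₁) (hψ : 0 ≤ ψ) :
    (1 - c) / 2 * ‖Ω‖ ^ 2 + (k₂ - c) * ψ ≤
      1 / 2 * ‖Ω‖ ^ 2 + c * ⟪η, Ω⟫ + (k₂ + c * k₁) * ψ := by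
  have young : -(‖η‖ ^ 2 + ‖Ω‖ ^ 2) / 2 ≤ ⟪η, Ω⟫ := by
    nlinarith [norm_add_sq_real η Ω, sq_nonneg ‖η + Ω‖]
  nlinarith [mul_le_mul_of_nonneg_left young hc, mul_nonneg hc (mul_nonneg hk₁ hψ)]

/-- for `k₁, k₂ > 0` there exist `c₀ > 0`, `ε > 0` such that the attitude
Lyapunov function `V₂ = ½‖Ω‖² + c₀⟨η(R),Ω⟩ + (k₂+c₀k₁)Ψ(R)` is positive definite on
`SO(3) × ℝ³`, vanishing only at `(R,Ω) = (I₃,0)`. -/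
theorem attitude_lyapunov_posdef (k₁ k₂ : ℝ) (hk₁ : 0 < k₁) (hk₂ : 0 < k₂) :
    ∃ c₀ > (0:ℝ), ∃ ε > (0:ℝ),
      (∀ (R : Matrix (Fin 3) (Fin 3) ℝ) (Ω : V3), SO3 R →
        (1/2) * ‖Ω‖ ^ 2 + c₀ * ⟪etaVec R, Ω⟫ + (k₂ + c₀ * k₁) * Psi R ≥
          ε * (‖Ω‖ ^ 2 + Psi R)) ∧
      (∀ (R : Matrix (Fin 3) (Fin 3) ℝ) (Ω : V3), SO3 R →
        ((1/2) * ‖Ω‖ ^ 2 + c₀ * ⟪etaVec R, Ω⟫ + (k₂ + c₀ * k₁) * Psi R = 0 ↔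
          R = 1 ∧ Ω = 0)) := by
  obtain ⟨c, hc, hc₁, hc₂⟩ : ∃ c : ℝ, 0 < c ∧ c ≤ 1 / 2 ∧ c ≤ k₂ / 2 :=
    ⟨min 1 k₂ / 2, by positivity, by linarith [min_le_left 1 k₂], by linarith [min_le_right 1 k₂]⟩
  have bound : ∀ (R : Matrix (Fin 3) (Fin 3) ℝ) (Ω : V3), SO3 R →
      c / 2 * (‖Ω‖ ^ 2 + Psi R) ≤
        1 / 2 * ‖Ω‖ ^ 2 + c * ⟪etaVec R, Ω⟫ + (k₂ + c * k₁) * Psi R := by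
    intro R Ω hR
    have hψ := Psi_nonneg hR.1
    calc c / 2 * (‖Ω‖ ^ 2 + Psi R) ≤ (1 - c) / 2 * ‖Ω‖ ^ 2 + (k₂ - c) * Psi R := by
          nlinarith [sq_nonneg ‖Ω‖]
      _ ≤ _ := lyapunov_lower_bound (norm_etaVec_sq_le hR.1) hc.le hk₁.le hψ
  refine ⟨c, hc, c / 2, by positivity, bound, fun R Ω hR => ⟨fun hV => ?_, ?_⟩⟩
  · have hψ := Psi_nonneg hR.1
    have hsum : ‖Ω‖ ^ 2 + Psi R ≤ 0 := by nlinarith [bound R Ω hR]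
    obtain ⟨hΩ, hψ₀⟩ :=
      (add_eq_zero_iff_of_nonneg (sq_nonneg _) hψ).mp (le_antisymm hsum (by positivity))
    exact ⟨eq_one_of_Psi_eq_zero hR.1 hψ₀, by simpa using hΩ⟩
  · rintro ⟨rfl, rfl⟩
    simp [Psi]
end
end
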